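/- For a smooth convex function g_δ with 0 ≤ g_δ' ≤ 1 and t - 2δ ≤ g_δ(t) ≤ max(t,0), and φ a solution of Lφ = 0 with L = -∂_i(a^{ij}∂_j·) - εq, the function φ_δ = (g_δ ∘ φ)·χ_{Ω} (Ω a positivity component of φ) satisfies Lφ_δ ≤ χ_Ω εq φ (g_δ'∘φ) - εq φ_δ pointwise in the interior of Ω, using positive-definiteness of a^{ij} and convexity of g_δ. -/

import Mathlib

open Real Set Metric Filter Topology

lemma mono_deriv_nonneg {f : ℝ → ℝ} (hm : Monotone f) {t : ℝ}
    (hd : DifferentiableAt ℝ f t) : 0 ≤ deriv f t := by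
  have h := hd.hasDerivAt
  rw [hasDerivAt_iff_tendsto_slope] at h
  have h2 : Tendsto (slope f t) (nhdsWithin t (Set.Ioi t)) (𝓝 (deriv f t)) :=
    h.mono_left (nhdsWithin_mono _ (fun y hy => ne_of_gt hy))
  refine ge_of_tendsto h2 (eventually_nhdsWithin_of_forall fun y hy => ?_)
  have : (0:ℝ) ≤ (f y - f t) / (y - t) :=
    div_nonneg (sub_nonneg.2 (hm (le_of_lt hy))) (sub_nonneg.2 (le_of_lt hy))
  simpa [slope_def_field, div_eq_mul_inv] using this

lemma fderiv_comp_real {E : Type*} [NormedAddCommGroup E] [NormedSpace ℝ E]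
    {g : ℝ → ℝ} {f : E → ℝ} {x : E} (hg : DifferentiableAt ℝ g (f x))
    (hf : DifferentiableAt ℝ f x) (v : E) :
    fderiv ℝ (fun y => g (f y)) x v = deriv g (f x) * fderiv ℝ f x v := by
  rw [show (fun y => g (f y)) = g ∘ f from rfl, fderiv_comp x hg hf]
  simp only [ContinuousLinearMap.comp_apply]
  have : fderiv ℝ g (f x) (fderiv ℝ f x v) =
      (fderiv ℝ f x v) • (fderiv ℝ g (f x) 1) := by
    rw [← (fderiv ℝ g (f x)).map_smul]; norm_num
  rw [this, fderiv_apply_one_eq_deriv, smul_eq_mul]; ring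

theorem L_phi_delta_subsolution (n : ℕ) (hn : 1 ≤ n)
    (ε δ : ℝ) (hε : 0 < ε) (hδ : 0 < δ)
    (a : Fin n → Fin n → EuclideanSpace ℝ (Fin n) → ℝ)
    (q φ : EuclideanSpace ℝ (Fin n) → ℝ)
    (gδ : ℝ → ℝ)
    (ha : ∀ i j, ContDiff ℝ 1 (a i j))
    (hsymm : ∀ i j x, a i j x = a j i x)
    (hposdef : ∀ x (ξ : Fin n → ℝ), 0 ≤ ∑ i, ∑ j, a i j x * ξ i * ξ j)
    (hφ : ContDiff ℝ 2 φ)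
    (hg : ContDiff ℝ (⊤ : ℕ∞) gδ)
    (hgconv : ConvexOn ℝ Set.univ gδ)
    (hg' : ∀ t, 0 ≤ deriv gδ t ∧ deriv gδ t ≤ 1)
    (hgbd : ∀ t, t - 2 * δ ≤ gδ t ∧ gδ t ≤ max t 0)
    -- Lφ = 0 on B₁ where Lu = -∑ᵢ ∂ᵢ(∑ⱼ aⁱʲ ∂ⱼ u) - ε q u
    (heq : ∀ x ∈ ball (0 : EuclideanSpace ℝ (Fin n)) 1,
      -(∑ i, fderiv ℝ
          (fun y => ∑ j, a i j y * fderiv ℝ φ y (EuclideanSpace.single j 1))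
          x (EuclideanSpace.single i 1)) - ε * q x * φ x = 0)
    (Ω : Set (EuclideanSpace ℝ (Fin n))) (x₀ : EuclideanSpace ℝ (Fin n))
    (hx₀ : x₀ ∈ ball (0 : EuclideanSpace ℝ (Fin n)) 1 ∧ 0 < φ x₀)
    (hΩ : Ω = connectedComponentIn
        {x | x ∈ ball (0 : EuclideanSpace ℝ (Fin n)) 1 ∧ 0 < φ x} x₀)
    (φδ : EuclideanSpace ℝ (Fin n) → ℝ)
    (hφδ : ∀ x, φδ x = gδ (φ x) * Set.indicator Ω (fun _ => (1:ℝ)) x) :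
    ∀ x ∈ Ω,
      -(∑ i, fderiv ℝ
          (fun y => ∑ j, a i j y * fderiv ℝ φδ y (EuclideanSpace.single j 1))
          x (EuclideanSpace.single i 1)) - ε * q x * φδ x ≤
        ε * q x * φ x * deriv gδ (φ x) - ε * q x * φδ x := by
  intro x hx
  have hopenS : IsOpen {x : EuclideanSpace ℝ (Fin n) |
      x ∈ ball (0 : EuclideanSpace ℝ (Fin n)) 1 ∧ 0 < φ x} :=
    isOpen_ball.inter (isOpen_Ioi.preimage hφ.continuous)
  have hΩopen : IsOpen Ω := by rw [hΩ]; exact hopenS.connectedComponentIn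
  have hsub : Ω ⊆ {x : EuclideanSpace ℝ (Fin n) |
      x ∈ ball (0 : EuclideanSpace ℝ (Fin n)) 1 ∧ 0 < φ x} := by
    rw [hΩ]; exact connectedComponentIn_subset _ _
  have hxball : x ∈ ball (0 : EuclideanSpace ℝ (Fin n)) 1 := (hsub hx).1
  have hφd : Differentiable ℝ φ := hφ.differentiable (by norm_num)
  have hgd : Differentiable ℝ gδ := hg.differentiable (by simp)
  have hg'C : ContDiff ℝ ((⊤:ℕ∞) : WithTop ℕ∞) (deriv gδ) := (contDiff_infty_iff_deriv.mp (hg.of_le (by simp))).2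
  have hg'd : Differentiable ℝ (deriv gδ) := hg'C.differentiable (by simp)
  have hDφ : ContDiff ℝ 1 (fderiv ℝ φ) := hφ.fderiv_right (by norm_num)
  -- F i is differentiable
  have hFd : ∀ i, Differentiable ℝ
      (fun y => ∑ j, a i j y * fderiv ℝ φ y (EuclideanSpace.single j 1)) := by
    intro i
    apply Differentiable.fun_sum
    intro j _
    exact ((ha i j).differentiable one_ne_zero).mul
      ((hDφ.differentiable one_ne_zero).clm_apply (differentiable_const _))
  -- φδ agrees with gδ ∘ φ near points of Ω
  have hev : ∀ y ∈ Ω, φδ =ᶠ[𝓝 y] fun z => gδ (φ z) := by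
    intro y hy
    filter_upwards [hΩopen.mem_nhds hy] with z hz
    rw [hφδ, Set.indicator_of_mem hz, mul_one]
  -- the flux functions agree near x
  have hinner : ∀ i, fderiv ℝ
      (fun y => ∑ j, a i j y * fderiv ℝ φδ y (EuclideanSpace.single j 1)) x =
      fderiv ℝ (fun y => deriv gδ (φ y) *
        ∑ j, a i j y * fderiv ℝ φ y (EuclideanSpace.single j 1)) x := by
    intro i
    apply Filter.EventuallyEq.fderiv_eq
    filter_upwards [hΩopen.mem_nhds hx] with y hy
    have h1 : fderiv ℝ φδ y = fderiv ℝ (fun z => gδ (φ z)) y := (hev y hy).fderiv_eq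
    simp only [h1]
    rw [Finset.mul_sum]
    refine Finset.sum_congr rfl fun j _ => ?_
    rw [fderiv_comp_real hgd.differentiableAt hφd.differentiableAt]
    ring
  have hu : DifferentiableAt ℝ (fun z => deriv gδ (φ z)) x :=
    (hg'd.differentiableAt).comp x hφd.differentiableAt
  have hprod : ∀ i, fderiv ℝ (fun y => deriv gδ (φ y) *
      ∑ j, a i j y * fderiv ℝ φ y (EuclideanSpace.single j 1)) x
        (EuclideanSpace.single i 1) =
      deriv gδ (φ x) * fderiv ℝ
        (fun y => ∑ j, a i j y * fderiv ℝ φ y (EuclideanSpace.single j 1)) x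
        (EuclideanSpace.single i 1)
      + (deriv (deriv gδ) (φ x) * fderiv ℝ φ x (EuclideanSpace.single i 1)) *
        (∑ j, a i j x * fderiv ℝ φ x (EuclideanSpace.single j 1)) := by
    intro i
    rw [fderiv_fun_mul hu ((hFd i).differentiableAt)]
    simp only [ContinuousLinearMap.add_apply, ContinuousLinearMap.smul_apply,
      smul_eq_mul]
    rw [fderiv_comp_real hg'd.differentiableAt hφd.differentiableAt]
    ring
  have hsum : ∑ i, fderiv ℝ
      (fun y => ∑ j, a i j y * fderiv ℝ φδ y (EuclideanSpace.single j 1)) x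
      (EuclideanSpace.single i 1) =
      deriv gδ (φ x) * (∑ i, fderiv ℝ
        (fun y => ∑ j, a i j y * fderiv ℝ φ y (EuclideanSpace.single j 1)) x
        (EuclideanSpace.single i 1))
      + deriv (deriv gδ) (φ x) * ∑ i, fderiv ℝ φ x (EuclideanSpace.single i 1) *
        (∑ j, a i j x * fderiv ℝ φ x (EuclideanSpace.single j 1)) := by
    rw [Finset.mul_sum, Finset.mul_sum, ← Finset.sum_add_distrib]
    refine Finset.sum_congr rfl fun i _ => ?_
    rw [hinner i, hprod i]
    ring
  -- quadratic form nonneg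
  have hQ : 0 ≤ ∑ i, fderiv ℝ φ x (EuclideanSpace.single i 1) *
      (∑ j, a i j x * fderiv ℝ φ x (EuclideanSpace.single j 1)) := by
    have h0 := hposdef x (fun k => fderiv ℝ φ x (EuclideanSpace.single k 1))
    have h1 : ∑ i, fderiv ℝ φ x (EuclideanSpace.single i 1) *
        (∑ j, a i j x * fderiv ℝ φ x (EuclideanSpace.single j 1)) =
        ∑ i, ∑ j, a i j x * fderiv ℝ φ x (EuclideanSpace.single i 1) *
          fderiv ℝ φ x (EuclideanSpace.single j 1) := by
      refine Finset.sum_congr rfl fun i _ => ?_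
      rw [Finset.mul_sum]
      exact Finset.sum_congr rfl fun j _ => by ring
    rw [h1]
    exact h0
  -- second derivative nonneg
  have hg'' : 0 ≤ deriv (deriv gδ) (φ x) := by
    have hmono : Monotone (deriv gδ) :=
      monotoneOn_univ.mp (hgconv.monotoneOn_deriv fun y _ => hgd.differentiableAt)
    exact mono_deriv_nonneg hmono hg'd.differentiableAt
  have hLφ : ∑ i, fderiv ℝ
      (fun y => ∑ j, a i j y * fderiv ℝ φ y (EuclideanSpace.single j 1)) x
      (EuclideanSpace.single i 1) = -(ε * q x * φ x) := by
    have := heq x hxball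
    linarith
  rw [hsum, hLφ]
  have := mul_nonneg hg'' hQ
  nlinarith [this]
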